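/- With G, H, u_1,…,u_k, v_1,…,v_k as above, suppose T_{G_S} = T_{H_S} for every S ⊆ {{i,j}: 1≤i<j≤k}. Then G and H have the same number of loops, and for each pair 1 ≤ i < j ≤ k, the number of edges of G joining u_i and u_j equals the number of edges of H joining v_i and v_j. -/

import Mathlib

open scoped BigOperators
open MvPolynomial

attribute [local instance] Classical.propDecidable

/-- A multigraph: finite vertex and edge types, each edge has an unordered
pair of endpoints (loops and parallel edges allowed). -/
structure Multigraph where
  V : Type
  E : Type
  [fintypeV : Fintype V]
  [fintypeE : Fintype E]
  [decEqV : DecidableEq V]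
  [decEqE : DecidableEq E]
  ends : E → Sym2 V

attribute [instance] Multigraph.fintypeV Multigraph.fintypeE
  Multigraph.decEqV Multigraph.decEqE

noncomputable instance quotSetoidFintype {α : Type} [Fintype α] (s : Setoid α) :
    Fintype (Quotient s) := by classical exact Quotient.fintype s

noncomputable instance connCompFintype {α : Type} [Fintype α] (G : SimpleGraph α) :
    Fintype G.ConnectedComponent := by
  classical exact Fintype.ofSurjective G.connectedComponentMk fun c => c.exists_rep

namespace Multigraph

variable (G : Multigraph)

/-- The simple graph induced by a set of edges `A` (parallel edges and loops
do not affect connectivity). -/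
def spanning (A : Finset G.E) : SimpleGraph G.V :=
  SimpleGraph.fromRel (fun a b => ∃ e ∈ A, G.ends e = s(a, b))

/-- number of connected components of the spanning subgraph `(V, A)` -/
noncomputable def comps (A : Finset G.E) : ℕ :=
  Nat.card (G.spanning A).ConnectedComponent

/-- rank of an edge subset: `|V| - c(A)` -/
noncomputable def rk (A : Finset G.E) : ℕ :=
  Fintype.card G.V - G.comps A

/-- The Tutte polynomial, as a polynomial in the variables `X 0 = x`, `X 1 = y`. -/
noncomputable def tutte : MvPolynomial (Fin 2) ℤ :=
  ∑ A : Finset G.E,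
    (X 0 - 1) ^ (G.rk Finset.univ - G.rk A) * (X 1 - 1) ^ (A.card - G.rk A)

def Connected : Prop := (G.spanning Finset.univ).Connected

def IsLoop (e : G.E) : Prop := (G.ends e).IsDiag

def IsBridge (e : G.E) : Prop :=
  G.comps (Finset.univ.erase e) ≠ G.comps Finset.univ

noncomputable def numLoops : ℕ := Nat.card {e : G.E // (G.ends e).IsDiag}

/-- delete a set of edges -/
def deleteSet (F : Finset G.E) : Multigraph where
  V := G.V
  E := {e : G.E // e ∉ F}
  ends := fun e => G.ends e.1

/-- delete one edge -/
def delete (e : G.E) : Multigraph := G.deleteSet {e}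

/-- identify vertices along (the equivalence generated by) a relation `r` -/
noncomputable def identify (r : G.V → G.V → Prop) : Multigraph where
  V := Quotient (Relation.EqvGen.setoid r)
  E := G.E
  decEqV := Classical.decEq _
  ends := fun e => (G.ends e).map (Quotient.mk (Relation.EqvGen.setoid r))

/-- contract an edge: delete it and identify its two endpoints -/
noncomputable def contract (e : G.E) : Multigraph :=
  (G.delete e).identify (fun a b => a ∈ G.ends e ∧ b ∈ G.ends e)

/-- the projection of a vertex of `G` to a vertex of `G/e` -/
noncomputable def cmk (e : G.E) : G.V → (G.contract e).V := fun v => Quotient.mk _ v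

/-- restrict to the edges satisfying `P` (all vertices are kept) -/
noncomputable def edgeRestrict (P : G.E → Prop) : Multigraph where
  V := G.V
  E := {e : G.E // P e}
  ends := fun e => G.ends e.1

/-- add new edges indexed by `n` with prescribed endpoints -/
def addEdges (n : Type) [Fintype n] [DecidableEq n] (f : n → Sym2 G.V) :
    Multigraph where
  V := G.V
  E := G.E ⊕ n
  ends := Sum.elim G.ends f

/-- disjoint union -/
def disjUnion (H : Multigraph) : Multigraph where
  V := G.V ⊕ H.V
  E := G.E ⊕ H.E
  ends := Sum.elim (fun e => (G.ends e).map Sum.inl) (fun e => (H.ends e).map Sum.inr)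

/-- the gluing `G(u_1,…,u_k) ⊔ H(w_1,…,w_k)`: disjoint union with `u i`
identified with `w i` for each `i` -/
noncomputable def glue (H : Multigraph) {k : ℕ} (u : Fin k → G.V) (w : Fin k → H.V) :
    Multigraph :=
  (G.disjUnion H).identify
    (fun a b => ∃ i : Fin k, a = Sum.inl (u i) ∧ b = Sum.inr (w i))

/-- projection from `G.V ⊕ H.V` to the vertices of the gluing -/
noncomputable def glueMk (H : Multigraph) {k : ℕ} (u : Fin k → G.V) (w : Fin k → H.V) :
    G.V ⊕ H.V → (G.glue H u w).V := fun a => Quotient.mk _ a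

end Multigraph

/-- `σ` is an isomorphism of multigraphs: a vertex bijection preserving
edge multiplicities between every pair of vertices. -/
def Multigraph.IsIsoMap (G H : Multigraph) (σ : G.V ≃ H.V) : Prop :=
  ∀ p : Sym2 G.V,
    Nat.card {e : G.E // G.ends e = p} = Nat.card {e : H.E // H.ends e = p.map σ}

/-- `G` and `H` are isomorphic multigraphs -/
def Multigraph.Iso (G H : Multigraph) : Prop := ∃ σ : G.V ≃ H.V, G.IsIsoMap H σ

/-- `σ` is an automorphism of `G` -/
def Multigraph.IsAuto (G : Multigraph) (σ : G.V ≃ G.V) : Prop := G.IsIsoMap G σ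

/-- `Q` is a partition of the type `α` -/
def IsPartitionUniv {α : Type} (Q : Finset (Finset α)) : Prop :=
  (∀ B ∈ Q, B.Nonempty) ∧ ∀ i : α, ∃! B, B ∈ Q ∧ i ∈ B

/-!
Evaluated at `(x + 1, 2)`, the Tutte polynomial becomes `∑_A x ^ (r(E) - r(A))`, so `T_G` determines
the rank `r(E)` (as the degree) and the number of edge sets of each rank. The edge sets of rank `0`
are the sets of loops, so there are `2 ^ ℓ(G)` of them, `ℓ(G)` being the number of loops. Adding an
edge `e` between distinct vertices `a, b`, already joined by `m_G(a, b)` edges, creates exactly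
`2 ^ (ℓ(G) + m_G(a, b))` new edge sets of rank `1`, namely `e` together with any set of loops and of
edges parallel to `e`. Comparing `S = ∅` with `S = {{i, j}}` therefore recovers `m_G(u_i, u_j)`.
-/

open Finset

namespace SimpleGraph

variable {V : Type*} [Fintype V] {Γ : SimpleGraph V}

lemma card_connectedComponent_add_card_le (s : Finset V)
    (hs : ∀ v ∈ s, ∃ w ∉ s, Γ.Reachable v w) :
    Nat.card Γ.ConnectedComponent + #s ≤ Fintype.card V := by
  have hsurj : Function.Surjective fun v : {v // v ∉ s} => Γ.connectedComponentMk v.1 := by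
    rintro ⟨v⟩
    by_cases hv : v ∈ s
    · obtain ⟨w, hw, hvw⟩ := hs v hv
      exact ⟨⟨w, hw⟩, ConnectedComponent.sound hvw.symm⟩
    · exact ⟨⟨v, hv⟩, rfl⟩
  have hcard : Nat.card {v // v ∉ s} = Fintype.card V - #s := by
    simp [Nat.card_eq_fintype_card, Fintype.card_subtype_compl, Fintype.card_coe]
  have := Nat.card_le_card_of_surjective _ hsurj
  have := card_le_univ s
  omega

lemma card_connectedComponent_lt_of_adj {a b : V} (hab : Γ.Adj a b) :
    Nat.card Γ.ConnectedComponent < Fintype.card V := by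
  have := card_connectedComponent_add_card_le {b} (Γ := Γ) (by
    simpa using ⟨a, hab.ne, hab.symm.reachable⟩)
  simp only [card_singleton] at this
  omega

lemma card_le_card_connectedComponent_iff :
    Fintype.card V ≤ Nat.card Γ.ConnectedComponent ↔ Γ = ⊥ := by
  constructor
  · intro h
    ext a b
    simpa using fun hab => (card_connectedComponent_lt_of_adj hab).not_ge h
  · rintro rfl
    have hbij : Function.Bijective (⊥ : SimpleGraph V).connectedComponentMk :=
      ⟨fun _ _ h => reachable_bot.mp (ConnectedComponent.eq.mp h), fun c => c.exists_rep⟩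
    rw [← Nat.card_eq_of_bijective _ hbij, Nat.card_eq_fintype_card]

lemma card_connectedComponent_edge {a b : V} (hab : a ≠ b) :
    Nat.card (edge a b).ConnectedComponent = Fintype.card V - 1 := by
  have hadj : (edge a b).Adj a b := by simp [edge_adj, hab]
  -- Collapsing `b` onto `a` is constant on components and hits every vertex other than `b`.
  let q : V → {v // v ≠ b} := fun v => if hv : v = b then ⟨a, hab⟩ else ⟨v, hv⟩
  have hq : ∀ v w, (edge a b).Adj v w → q v = q w := by
    intro v w hvw
    rw [edge_adj] at hvw
    obtain ⟨⟨rfl, rfl⟩ | ⟨rfl, rfl⟩, -⟩ := hvw <;> simp [q, hab]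
  have hwalk : ∀ {v w} (p : (edge a b).Walk v w), q v = q w := by
    intro v w p
    induction p with
    | nil => rfl
    | cons h _ ih => exact (hq _ _ h).trans ih
  have hsurj : Function.Surjective (ConnectedComponent.lift q fun _ _ p _ => hwalk p) := by
    rintro ⟨v, hv⟩
    exact ⟨(edge a b).connectedComponentMk v, by simp [q, hv]⟩
  have hcard : Nat.card {v // v ≠ b} = Fintype.card V - 1 := by
    simp [Nat.card_eq_fintype_card, Fintype.card_subtype_compl]
  have := Nat.card_le_card_of_surjective _ hsurj
  have := card_connectedComponent_lt_of_adj hadj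
  omega

lemma card_connectedComponent_add_two_le {a b c d : V} (hab : Γ.Adj a b) (hcd : Γ.Adj c d)
    (hca : c ≠ a) (hcb : c ≠ b) : Nat.card Γ.ConnectedComponent + 2 ≤ Fintype.card V := by
  wlog hda : d ≠ a generalizing a b
  · exact this hab.symm hcb hca (by rw [not_not.mp hda]; exact hab.ne)
  have := card_connectedComponent_add_card_le {a, c} (Γ := Γ) (by
    simp only [mem_insert, mem_singleton, forall_eq_or_imp, forall_eq]
    exact ⟨⟨b, by simp [hab.ne.symm, hcb.symm], hab.reachable⟩,
      ⟨d, by simp [hda, hcd.ne.symm], hcd.reachable⟩⟩)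
  rwa [card_pair hca.symm] at this

end SimpleGraph

lemma Finset.card_filter_disjSum {α β γ : Type*} [Fintype α] [Fintype β] [Fintype γ]
    (e : α ⊕ β ≃ γ) (P : Finset γ → Prop) [DecidablePred P] :
    #{A | P A} = ∑ C : Finset β, #{B : Finset α | P ((B.disjSum C).map e.toEmbedding)} := by
  calc #{A | P A} = #{A' : Finset (α ⊕ β) | P (A'.map e.toEmbedding)} :=
        (card_equiv e.finsetCongr (by simp)).symm
    _ = _ := by
      rw [card_filter, ← sumEquiv.symm.toEquiv.sum_comp, Fintype.sum_prod_type_right]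
      simp only [card_filter]
      rfl

namespace Multigraph

variable {G : Multigraph} {A B : Finset G.E}

lemma spanning_adj {x y : G.V} :
    (G.spanning A).Adj x y ↔ x ≠ y ∧ ∃ e ∈ A, G.ends e = s(x, y) := by
  simp only [spanning, SimpleGraph.fromRel_adj, Sym2.eq_swap (a := y), or_self]

lemma spanning_mono (h : A ⊆ B) : G.spanning A ≤ G.spanning B := by
  intro x y
  simp only [spanning_adj]
  exact fun ⟨hxy, e, he, hends⟩ => ⟨hxy, e, h he, hends⟩

lemma rk_mono (h : A ⊆ B) : G.rk A ≤ G.rk B :=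
  Nat.sub_le_sub_left
    (SimpleGraph.ConnectedComponent.card_le_card_of_le (spanning_mono h)) _

lemma spanning_eq_bot_iff : G.spanning A = ⊥ ↔ ∀ e ∈ A, (G.ends e).IsDiag := by
  constructor
  · intro h e he
    induction hends : G.ends e using Sym2.ind with
    | h x y =>
      by_contra hxy
      have : (G.spanning A).Adj x y := spanning_adj.mpr ⟨hxy, e, he, hends⟩
      simp [h] at this
  · intro h
    ext x y
    simp only [spanning_adj, SimpleGraph.bot_adj, iff_false, not_and, not_exists]
    intro hxy e he hends
    exact hxy (by simpa [hends] using h e he)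

lemma rk_eq_zero_iff : G.rk A = 0 ↔ ∀ e ∈ A, (G.ends e).IsDiag := by
  rw [rk, comps, Nat.sub_eq_zero_iff_le, SimpleGraph.card_le_card_connectedComponent_iff,
    spanning_eq_bot_iff]

lemma spanning_eq_edge {a b : G.V} {e₀ : G.E} (he₀ : e₀ ∈ A) (hends : G.ends e₀ = s(a, b))
    (hA : ∀ e ∈ A, (G.ends e).IsDiag ∨ G.ends e = s(a, b)) :
    G.spanning A = SimpleGraph.edge a b := by
  ext x y
  rw [spanning_adj, SimpleGraph.edge_adj, ← Sym2.eq_iff, and_comm]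
  refine and_congr_left fun hxy =>
    ⟨fun ⟨e, he, he'⟩ => ?_, fun h => ⟨e₀, he₀, hends.trans h.symm⟩⟩
  rcases hA e he with hdiag | hab
  · exact absurd (by simpa [he'] using hdiag) hxy
  · rw [← he', hab]

lemma rk_eq_one_iff {a b : G.V} (hab : a ≠ b) {e₀ : G.E} (he₀ : e₀ ∈ A)
    (hends : G.ends e₀ = s(a, b)) :
    G.rk A = 1 ↔ ∀ e ∈ A, (G.ends e).IsDiag ∨ G.ends e = s(a, b) := by
  have hadj : (G.spanning A).Adj a b := spanning_adj.mpr ⟨hab, e₀, he₀, hends⟩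
  constructor
  · intro h e he
    by_contra! hne
    induction hends' : G.ends e using Sym2.ind with
    | h c d =>
      rw [hends', Sym2.mk_isDiag_iff] at hne
      have hcd : (G.spanning A).Adj c d := spanning_adj.mpr ⟨hne.1, e, he, hends'⟩
      have hfresh : (c ≠ a ∧ c ≠ b) ∨ (d ≠ a ∧ d ≠ b) := by
        have := hne.2
        rw [ne_eq, Sym2.eq_iff] at this
        grind
      have : Nat.card (G.spanning A).ConnectedComponent + 2 ≤ Fintype.card G.V := by
        rcases hfresh with ⟨hca, hcb⟩ | ⟨hda, hdb⟩
        · exact SimpleGraph.card_connectedComponent_add_two_le hadj hcd hca hcb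
        · exact SimpleGraph.card_connectedComponent_add_two_le hadj hcd.symm hda hdb
      rw [rk, comps] at h
      omega
  · intro hA
    have := Fintype.one_lt_card_iff_nontrivial.mpr ⟨⟨a, b, hab⟩⟩
    rw [rk, comps, spanning_eq_edge he₀ hends hA, SimpleGraph.card_connectedComponent_edge hab]
    omega

lemma card_rk_eq_zero : #{A : Finset G.E | G.rk A = 0} = 2 ^ G.numLoops := by
  have : ({A | G.rk A = 0} : Finset (Finset G.E)) =
      ({e | (G.ends e).IsDiag} : Finset G.E).powerset := by
    ext A
    simp [rk_eq_zero_iff, subset_iff]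
  rw [this, card_powerset, numLoops, Nat.card_eq_fintype_card, Fintype.card_subtype]

noncomputable def corankPoly (G : Multigraph) : Polynomial ℤ :=
  aeval ![Polynomial.X + 1, 2] G.tutte

lemma corankPoly_eq_sum : G.corankPoly = ∑ A, Polynomial.X ^ (G.rk univ - G.rk A) := by
  norm_num [corankPoly, tutte, map_sum]

lemma coeff_corankPoly (c : ℕ) : G.corankPoly.coeff c = #{A | G.rk univ - G.rk A = c} := by
  simp [corankPoly_eq_sum, Polynomial.finsetSum_coeff, Polynomial.coeff_X_pow, eq_comm]

lemma natDegree_corankPoly : G.corankPoly.natDegree = G.rk univ := by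
  apply Polynomial.natDegree_eq_of_le_of_coeff_ne_zero
  · rw [corankPoly_eq_sum]
    exact Polynomial.natDegree_sum_le_of_forall_le _ _ fun A _ =>
      (Polynomial.natDegree_X_pow_le _).trans (Nat.sub_le _ _)
  · rw [coeff_corankPoly]
    exact_mod_cast (card_pos.mpr ⟨∅, by simp [(rk_eq_zero_iff (A := ∅)).mpr (by simp)]⟩).ne'

lemma card_rk_eq_coeff_corankPoly {c : ℕ} (hc : c ≤ G.rk univ) :
    #{A | G.rk A = c} = G.corankPoly.coeff (G.rk univ - c) := by
  rw [coeff_corankPoly]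
  congr 2
  ext A
  have := rk_mono (subset_univ A)
  simp only [mem_filter, mem_univ, true_and]
  omega

theorem card_rk_eq_of_tutte_eq {H : Multigraph} (h : G.tutte = H.tutte) (c : ℕ) :
    #{A | G.rk A = c} = #{A | H.rk A = c} := by
  have hpoly : G.corankPoly = H.corankPoly := by rw [corankPoly, h, corankPoly]
  have hr : G.rk univ = H.rk univ := by
    rw [← natDegree_corankPoly, hpoly, natDegree_corankPoly]
  by_cases hc : c ≤ G.rk univ
  · have := card_rk_eq_coeff_corankPoly hc
    rw [hpoly, hr, ← card_rk_eq_coeff_corankPoly (hr ▸ hc)] at this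
    exact_mod_cast this
  · have hG := fun A : Finset G.E => rk_mono (subset_univ A)
    have hH := fun A : Finset H.E => rk_mono (subset_univ A)
    rw [filter_false_of_mem fun A _ => by grind, filter_false_of_mem fun A _ => by grind,
      card_empty, card_empty]

lemma card_filter_isDiag_or_eq {a b : G.V} (hab : a ≠ b) :
    #{e | (G.ends e).IsDiag ∨ G.ends e = s(a, b)} =
      G.numLoops + Nat.card {e // G.ends e = s(a, b)} := by
  rw [filter_or, card_union_of_disjoint, numLoops, Nat.card_eq_fintype_card,
    Fintype.card_subtype, Nat.card_eq_fintype_card, Fintype.card_subtype]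
  exact disjoint_filter.mpr fun e _ hdiag hends => hab (by simpa [hends] using hdiag)

section AddEdges

variable {n : Type} [Fintype n] [DecidableEq n] {f : n → Sym2 G.V}

variable (G n f) in
/-- `Equiv.refl`, typed so that edge sets of `G.addEdges n f` built from `G.E ⊕ n` stay well-typed
up to reducible unfolding, as `rw` and `simp` require. -/
def addEdgesEdgeEquiv : G.E ⊕ n ≃ (G.addEdges n f).E := Equiv.refl _

lemma rk_addEdges_disjSum_empty (B : Finset G.E) :
    (G.addEdges n f).rk ((B.disjSum ∅).map (G.addEdgesEdgeEquiv n f).toEmbedding) = G.rk B := by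
  have : (G.addEdges n f).spanning ((B.disjSum ∅).map (G.addEdgesEdgeEquiv n f).toEmbedding) =
      G.spanning B := by
    ext x y
    simp only [spanning_adj, addEdgesEdgeEquiv, disjSum_empty, mem_map, exists_exists_and_eq_and]
    exact (spanning_adj (G := G) (A := B) (x := x) (y := y)).symm
  simp only [rk, comps, this]
  rfl

lemma rk_addEdges_disjSum_singleton_eq_one_iff [Unique n] {a b : G.V} (hab : a ≠ b)
    (hf : f default = s(a, b)) (B : Finset G.E) :
    (G.addEdges n f).rk ((B.disjSum {default}).map (G.addEdgesEdgeEquiv n f).toEmbedding) = 1 ↔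
      ∀ e ∈ B, (G.ends e).IsDiag ∨ G.ends e = s(a, b) := by
  rw [rk_eq_one_iff (G := G.addEdges n f) hab (e₀ := G.addEdgesEdgeEquiv n f (.inr default))
    (by simp) hf]
  refine ⟨fun h e he => h _ (mem_map_of_mem _ (inl_mem_disjSum.mpr he)), fun h x hx => ?_⟩
  obtain ⟨e | t, he, rfl⟩ := mem_map.mp hx
  · exact h e (inl_mem_disjSum.mp he)
  · exact .inr (Unique.eq_default t ▸ hf)

lemma card_rk_addEdges_of_isEmpty [IsEmpty n] (c : ℕ) :
    #{A | (G.addEdges n f).rk A = c} = #{A | G.rk A = c} := by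
  rw [card_filter_disjSum (G.addEdgesEdgeEquiv n f), Fintype.sum_unique]
  exact congrArg card (filter_congr fun B _ => by
    rw [← rk_addEdges_disjSum_empty (n := n) (f := f) B]
    rfl)

lemma card_rk_addEdges_eq_one [Unique n] {a b : G.V} (hab : a ≠ b) (hf : f default = s(a, b)) :
    #{A | (G.addEdges n f).rk A = 1} =
      #{A | G.rk A = 1} + 2 ^ (G.numLoops + Nat.card {e // G.ends e = s(a, b)}) := by
  have huniv : (univ : Finset (Finset n)) = {∅, {default}} := by
    ext C
    simp [or_iff_not_imp_left, ← nonempty_iff_ne_empty, nonempty_iff_eq_singleton_default]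
  rw [card_filter_disjSum (G.addEdgesEdgeEquiv n f), huniv, sum_pair (by simp),
    ← card_filter_isDiag_or_eq hab, ← card_powerset]
  congr 1
  · exact congrArg card (filter_congr fun B _ => by rw [rk_addEdges_disjSum_empty])
  · congr 1
    ext B
    simp [rk_addEdges_disjSum_singleton_eq_one_iff hab hf, subset_iff]

end AddEdges

end Multigraph

/-- the hypotheses of the gluing theorem force `G` and `H` to have
the same number of loops and the same number of edges between corresponding
pairs of distinguished vertices. -/
theorem stmt_7 (G H : Multigraph) {k : ℕ}
    (u : Fin k → G.V) (v : Fin k → H.V)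
    (hu : Function.Injective u) (hv : Function.Injective v)
    (h : ∀ S : Finset (Sym2 (Fin k)), (∀ p ∈ S, ¬ p.IsDiag) →
      (G.addEdges {p // p ∈ S} (fun p => Sym2.map u p.1)).tutte =
        (H.addEdges {p // p ∈ S} (fun p => Sym2.map v p.1)).tutte) :
    G.numLoops = H.numLoops ∧
      ∀ i j : Fin k, i ≠ j →
        Nat.card {e : G.E // G.ends e = s(u i, u j)} =
          Nat.card {e : H.E // H.ends e = s(v i, v j)} := by
  have hrk (c : ℕ) : #{A | G.rk A = c} = #{A | H.rk A = c} := by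
    simpa only [Multigraph.card_rk_addEdges_of_isEmpty] using
      Multigraph.card_rk_eq_of_tutte_eq (h ∅ (by simp)) c
  have hloops : G.numLoops = H.numLoops := by
    simpa only [Multigraph.card_rk_eq_zero, Nat.pow_right_injective le_rfl |>.eq_iff] using hrk 0
  refine ⟨hloops, fun i j hij => ?_⟩
  have := Multigraph.card_rk_eq_of_tutte_eq (h {s(i, j)} (by simpa using hij)) 1
  rw [Multigraph.card_rk_addEdges_eq_one (hu.ne hij) (Sym2.map_mk u i j),
    Multigraph.card_rk_addEdges_eq_one (hv.ne hij) (Sym2.map_mk v i j), hrk, hloops] at this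
  simpa using this
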